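/- arXiv:1610.01299 — 6 statements merged into one kernel-verified Lean document; each statement's English description precedes it below -/
import Mathlib

section
/- Let g₂, g₃, x, y be complex numbers with y² = 4x³ − g₂x − g₃, y ≠ 0 and g₂³ − 27g₃² ≠ 0. Then there is no complex number Z satisfying simultaneously Z³ − 3xZ − y = 0 and 3yZ² + (12x² − g₂)Z + 3xy = 0. -/
/-- Algebraic core of Lemma 2.2: if `y² = 4x³ − g₂x − g₃`, `y ≠ 0` and the discriminant
`g₂³ − 27g₃² ≠ 0`, then no complex `Z` satisfies both `Z³ − 3xZ − y = 0` and
`3yZ² + (12x² − g₂)Z + 3xy = 0`. -/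
theorem no_common_root (g₂ g₃ x y : ℂ) (hy2 : y ^ 2 = 4 * x ^ 3 - g₂ * x - g₃)
    (hy : y ≠ 0) (hdisc : g₂ ^ 3 - 27 * g₃ ^ 2 ≠ 0) :
    ¬∃ Z : ℂ, Z ^ 3 - 3 * x * Z - y = 0 ∧
      3 * y * Z ^ 2 + (12 * x ^ 2 - g₂) * Z + 3 * x * y = 0 := by
  rintro ⟨Z, hP, hQ⟩
  have h0 : y * (g₂ ^ 3 - 27 * g₃ ^ 2) = 0 := by
    linear_combination
      (-((-27)*y^4 + 108*x*y^3*Z + 540*x^3*y^2 + (-432)*x^4*y*Z + (-1728)*x^6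
        + (-45)*g₂*x*y^2 + 72*g₂*x^2*y*Z + 432*g₂*x^4 + (-3)*g₂^2*y*Z
        + (-36)*g₂^2*x^2 + g₂^3)) * hP
      + (-(9*y^3*Z + (-36)*x*y^2*Z^2 + 108*x^2*y^2 + (-36)*x^3*y*Z + 144*x^4*Z^2
        + (-432)*x^5 + 3*g₂*y^2 + 3*g₂*x*y*Z + (-24)*g₂*x^2*Z^2 + 72*g₂*x^3
        + g₂^2*Z^2 + (-3)*g₂^2*x)) * hQ
      + (27*y^3 + (-108)*x^3*y + (-27)*g₃*y + 27*g₂*x*y) * hy2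
  exact mul_ne_zero hy hdisc h0
end

section
/- Let γ = [[a,b],[c,d]] ∈ SL(2,ℤ), τ ∈ ℍ, τ' = (aτ+b)/(cτ+d), and let (s',r') = (s,r)·γ^{-1}. Suppose (r,s) ∈ ℂ² satisfies r + sτ ∉ Λ_τ. Then r' + s'τ' ∉ Λ_{τ'} and Z^{(2)}_{r',s'}(τ') = (cτ+d)³ Z^{(2)}_{r,s}(τ). -/
open Complex

noncomputable section

/-- The lattice point `m + n·τ` for `ω = (m, n)`. -/
def latticePt (τ : ℂ) (ω : ℤ × ℤ) : ℂ := (ω.1 : ℂ) + (ω.2 : ℂ) * τ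

/-- `z ∈ Λ_τ = ℤ + ℤτ`. -/
def InLattice (τ z : ℂ) : Prop := ∃ m n : ℤ, z = (m : ℂ) + (n : ℂ) * τ

/-- The Weierstrass elliptic function `℘(z|τ)`. -/
def wp (τ z : ℂ) : ℂ :=
  1 / z ^ 2 + ∑' ω : ℤ × ℤ,
    if ω = 0 then 0 else 1 / (z - latticePt τ ω) ^ 2 - 1 / latticePt τ ω ^ 2

/-- `℘'(z|τ)`, the derivative of `℘` in `z`. -/
def wpDeriv (τ z : ℂ) : ℂ := deriv (wp τ) z

/-- The Weierstrass zeta function `ζ(z|τ)`. -/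
def wzeta (τ z : ℂ) : ℂ :=
  1 / z + ∑' ω : ℤ × ℤ,
    if ω = 0 then 0 else 1 / (z - latticePt τ ω) + 1 / latticePt τ ω + z / latticePt τ ω ^ 2

/-- The quasi-period `η₁(τ) = 2ζ(1/2|τ)`. -/
def eta1 (τ : ℂ) : ℂ := 2 * wzeta τ (1 / 2)

/-- The quasi-period `η₂(τ) = 2ζ(τ/2|τ)`. -/
def eta2 (τ : ℂ) : ℂ := 2 * wzeta τ (τ / 2)

/-- The invariant `g₂(τ)`. -/
def gTwo (τ : ℂ) : ℂ := 60 * ∑' ω : ℤ × ℤ, if ω = 0 then 0 else 1 / latticePt τ ω ^ 4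

/-- The Hecke-type form `Z_{r,s}(τ)`. -/
def Zrs (r s τ : ℂ) : ℂ := wzeta τ (r + s * τ) - r * eta1 τ - s * eta2 τ

/-- The premodular form `Z^{(2)}_{r,s}(τ)`. -/
def Z2 (r s τ : ℂ) : ℂ :=
  Zrs r s τ ^ 3 - 3 * wp τ (r + s * τ) * Zrs r s τ - wpDeriv τ (r + s * τ)

/-- `(r, s) ∈ (½ℤ)²`. -/
def HalfInt (r s : ℂ) : Prop := (∃ m : ℤ, r = (m : ℂ) / 2) ∧ (∃ n : ℤ, s = (n : ℂ) / 2)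

end

/-!
Two facts about `ζ`, `℘`, `℘'` drive the transformation law. They are homogeneous of degrees
`-1, -2, -3` in the lattice, and `Λ_{τ'} = (cτ + d)⁻¹ Λ_τ` with `(cτ + d)(r' + s'τ') = r + sτ`; so
`ζ`, `℘` and `℘'` at `(r' + s'τ' | τ')` are `(cτ + d)`, `(cτ + d)²`, `(cτ + d)³` times their
values at `(r + sτ | τ)`. And `ζ` is quasi-periodic: `ζ' = -℘` with `℘` periodic, so on the
connected set `ℂ ∖ Λ` the difference `ζ(z + l) - ζ(z)` is a constant `η(l)`, additive in `l`, and
equal to `2ζ(l/2)` whenever `l/2 ∉ Λ` because `ζ` is odd. Applied to `l = d + cτ` and `l = b + aτ`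
this gives `η₁(τ') = (cτ + d)(dη₁ + cη₂)` and `η₂(τ') = (cτ + d)(bη₁ + aη₂)`, and the linear terms
of `Z_{r',s'}(τ')` recombine, via `ad - bc = 1`, into `(cτ + d) Z_{r,s}(τ)`.
-/

noncomputable section

namespace PeriodPair

variable (L : PeriodPair)

lemma isPreconnected_compl_lattice : IsPreconnected (L.lattice : Set ℂ)ᶜ :=
  (Set.Countable.isConnected_compl_of_one_lt_rank (by simp)
    (Set.countable_coe_iff.mp (countable_of_Lindelof_of_discrete (X := L.lattice)))).isPreconnected

lemma div_two_notMem_lattice_of_isCoprime {p q : ℤ} (hpq : IsCoprime p q) :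
    (p * L.ω₁ + q * L.ω₂) / 2 ∉ L.lattice := by
  intro hmem
  obtain ⟨m, n, h⟩ := mem_lattice.mp hmem
  obtain ⟨hm, hn⟩ := LinearIndependent.pair_iff.mp L.indep (2 * m - p) (2 * n - q) (by
    simp only [Complex.real_smul]
    push_cast
    linear_combination 2 * h)
  have hm : p = 2 * m := by exact_mod_cast (sub_eq_zero.mp hm).symm
  have hn : q = 2 * n := by exact_mod_cast (sub_eq_zero.mp hn).symm
  exact absurd (hpq.isUnit_of_dvd' ⟨m, hm⟩ ⟨n, hn⟩) (by norm_num [Int.isUnit_iff])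

/-- The summand at `l = 0` is `1 / z`, since `1 / 0 = 0`. -/
def weierstrassZeta (z : ℂ) : ℂ := ∑' l : L.lattice, (1 / (z - l) + 1 / l + z / l ^ 2)

lemma weierstrassZeta_bound (r : ℝ) (s : ℂ) (hs : ‖s‖ < r) (l : ℂ) (h : 2 * r ≤ ‖l‖) :
    ‖1 / (s - l) + 1 / l + s / l ^ 2‖ ≤ 2 * r ^ 2 * ‖l‖ ^ (-3 : ℝ) := by
  have hl : 0 < ‖l‖ := by linarith [norm_nonneg s]
  have hsl : ‖l‖ / 2 ≤ ‖s - l‖ := by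
    rw [norm_sub_rev]; linarith [norm_sub_norm_le l s]
  have hsl0 : s - l ≠ 0 := norm_pos_iff.mp (by linarith)
  calc ‖1 / (s - l) + 1 / l + s / l ^ 2‖ = ‖s‖ ^ 2 / (‖s - l‖ * ‖l‖ ^ 2) := by
        rw [show 1 / (s - l) + 1 / l + s / l ^ 2 = s ^ 2 / ((s - l) * l ^ 2) by
          field_simp [norm_pos_iff.mp hl, hsl0]; ring]
        simp
    _ ≤ r ^ 2 / (‖l‖ / 2 * ‖l‖ ^ 2) := by gcongr
    _ = 2 * r ^ 2 * ‖l‖ ^ (-3 : ℝ) := by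
        rw [Real.rpow_neg hl.le]; norm_cast; field

lemma hasSumLocallyUniformly_weierstrassZeta :
    HasSumLocallyUniformly (fun (l : L.lattice) (z : ℂ) ↦ 1 / (z - l) + 1 / l + z / l ^ 2)
      L.weierstrassZeta :=
  L.hasSumLocallyUniformly_aux (u := (2 * · ^ 2 * ‖·‖ ^ (-3 : ℝ))) _
    (fun _ _ ↦ (ZLattice.summable_norm_rpow _ _ (by simp; norm_num)).mul_left _) fun r _ ↦
    Filter.eventually_atTop.mpr ⟨2 * r, fun _ h s hs l hl ↦ weierstrassZeta_bound r s hs l (hl ▸ h)⟩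

lemma hasDerivAt_weierstrassZeta {z : ℂ} (hz : z ∉ L.lattice) :
    HasDerivAt L.weierstrassZeta (-℘[L] z) z := by
  have hsummand (l : L.lattice) (w : ℂ) (hw : w ∉ L.lattice) :
      HasDerivAt (fun w ↦ -(1 / (w - l) + 1 / (l : ℂ) + w / (l : ℂ) ^ 2))
        (1 / (w - l) ^ 2 - 1 / (l : ℂ) ^ 2) w := by
    have hwl : w - l ≠ 0 := sub_ne_zero.mpr fun h ↦ hw (h ▸ l.2)
    have := (((((hasDerivAt_id w).sub_const (l : ℂ)).inv hwl).add_const (1 / (l : ℂ))).add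
      ((hasDerivAt_id w).div_const ((l : ℂ) ^ 2))).neg
    simp only [one_div] at this ⊢
    exact this.congr_deriv (by simp only [id]; ring)
  -- differentiate `-ζ` termwise, so that the derivative series is exactly the `℘` series
  have := hasDerivAt_of_tendstoLocallyUniformlyOn (g := -L.weierstrassZeta)
    L.isClosed_lattice.isOpen_compl L.hasSumLocallyUniformly_weierstrassP.tendstoLocallyUniformlyOn
    (.of_forall fun t w hw ↦ HasDerivAt.fun_sum fun l _ ↦ hsummand l w hw)
    (fun w _ ↦ ?_) hz
  · simpa only [neg_neg] using this.neg
  · exact (L.hasSumLocallyUniformly_weierstrassZeta.hasSum (x := w)).neg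

lemma weierstrassZeta_neg (z : ℂ) : L.weierstrassZeta (-z) = -L.weierstrassZeta z := by
  simp only [weierstrassZeta]
  rw [← (Equiv.neg L.lattice).tsum_eq, ← tsum_neg]
  congr with l
  simp only [Equiv.neg_apply, NegMemClass.coe_neg, show -z - -(l : ℂ) = -(z - l) by ring,
    one_div, inv_neg, neg_sq, neg_div]
  ring

lemma weierstrassZeta_add_coe_sub_eq (l : L.lattice) {z w : ℂ} (hz : z ∉ L.lattice)
    (hw : w ∉ L.lattice) :
    L.weierstrassZeta (z + l) - L.weierstrassZeta z =
      L.weierstrassZeta (w + l) - L.weierstrassZeta w := by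
  have hderiv (x : ℂ) (hx : x ∉ L.lattice) :
      HasDerivAt (fun x ↦ L.weierstrassZeta (x + l) - L.weierstrassZeta x) 0 x := by
    have hxl : x + l ∉ L.lattice := fun h ↦ hx (by simpa using sub_mem h l.2)
    simpa using ((L.hasDerivAt_weierstrassZeta hxl).comp_add_const x l).fun_sub
      (L.hasDerivAt_weierstrassZeta hx)
  exact L.isClosed_lattice.isOpen_compl.is_const_of_deriv_eq_zero L.isPreconnected_compl_lattice
    (fun x hx ↦ (hderiv x hx).differentiableAt.differentiableWithinAt)
    (fun x hx ↦ (hderiv x hx).deriv) hz hw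

/-- The quasi-period `η(l)`: by `weierstrassZeta_add_coe_sub_eq`, `ζ(z + l) - ζ(z)` does not
depend on `z ∉ L.lattice`, and `ω₁ / 2` is one such point. -/
def quasiPeriod : L.lattice →+ ℂ where
  toFun l := L.weierstrassZeta (L.ω₁ / 2 + l) - L.weierstrassZeta (L.ω₁ / 2)
  map_zero' := by simp
  map_add' l l' := by
    have hl : L.ω₁ / 2 + l ∉ L.lattice := fun h ↦
      L.ω₁_div_two_notMem_lattice (by simpa using sub_mem h l.2)
    have := L.weierstrassZeta_add_coe_sub_eq l' hl L.ω₁_div_two_notMem_lattice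
    simp only [Submodule.coe_add, ← add_assoc]
    linear_combination this

lemma weierstrassZeta_add_coe {z : ℂ} (hz : z ∉ L.lattice) (l : L.lattice) :
    L.weierstrassZeta (z + l) = L.weierstrassZeta z + L.quasiPeriod l := by
  have := L.weierstrassZeta_add_coe_sub_eq l hz L.ω₁_div_two_notMem_lattice
  simp only [quasiPeriod, AddMonoidHom.coe_mk, ZeroHom.coe_mk]
  linear_combination this

lemma quasiPeriod_eq_two_mul_weierstrassZeta (l : L.lattice) (hl : (l : ℂ) / 2 ∉ L.lattice) :
    L.quasiPeriod l = 2 * L.weierstrassZeta (l / 2) := by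
  have := L.weierstrassZeta_add_coe (z := -(l / 2)) (by simpa using hl) l
  rw [L.weierstrassZeta_neg, show -((l : ℂ) / 2) + l = l / 2 by ring] at this
  linear_combination -this

lemma two_mul_weierstrassZeta_half {p q : ℤ} (hpq : IsCoprime p q) :
    2 * L.weierstrassZeta ((p * L.ω₁ + q * L.ω₂) / 2) =
      p * (2 * L.weierstrassZeta (L.ω₁ / 2)) + q * (2 * L.weierstrassZeta (L.ω₂ / 2)) := by
  let l : L.lattice := p • ⟨L.ω₁, L.ω₁_mem_lattice⟩ + q • ⟨L.ω₂, L.ω₂_mem_lattice⟩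
  have hl : (l : ℂ) = p * L.ω₁ + q * L.ω₂ := by simp [l, zsmul_eq_mul]
  have := L.quasiPeriod_eq_two_mul_weierstrassZeta l (hl ▸ L.div_two_notMem_lattice_of_isCoprime hpq)
  rw [map_add, map_zsmul, map_zsmul,
    L.quasiPeriod_eq_two_mul_weierstrassZeta _ L.ω₁_div_two_notMem_lattice,
    L.quasiPeriod_eq_two_mul_weierstrassZeta _ L.ω₂_div_two_notMem_lattice, hl] at this
  simpa [zsmul_eq_mul] using this.symm

def ofTau (τ : ℂ) (hτ : 0 < τ.im) : PeriodPair where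
  ω₁ := 1
  ω₂ := τ
  indep := LinearIndependent.pair_iff.mpr fun s t h ↦ by
    have ht : t * τ.im = 0 := by simpa using congrArg Complex.im h
    have ht : t = 0 := by simpa [hτ.ne'] using ht
    subst ht
    simpa using h

lemma coe_ofTau_latticeEquivProd_symm {τ : ℂ} (hτ : 0 < τ.im) (ω : ℤ × ℤ) :
    ((ofTau τ hτ).latticeEquivProd.symm ω : ℂ) = latticePt τ ω := by
  simpa [ofTau, latticePt] using (ofTau τ hτ).latticeEquiv_symm_apply ω

end PeriodPair

open PeriodPair

lemma wzeta_eq_weierstrassZeta {τ : ℂ} (hτ : 0 < τ.im) (z : ℂ) :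
    wzeta τ z = (ofTau τ hτ).weierstrassZeta z := by
  let e := (ofTau τ hτ).latticeEquivProd.symm.toEquiv
  have hsum := e.summable_iff.mpr
    ((ofTau τ hτ).hasSumLocallyUniformly_weierstrassZeta.hasSum (x := z)).summable
  have := hsum.tsum_eq_add_tsum_ite 0
  simp only [Function.comp_apply] at this
  rw [PeriodPair.weierstrassZeta, ← e.tsum_eq, this]
  simp [e, wzeta, coe_ofTau_latticeEquivProd_symm, latticePt]

lemma two_mul_wzeta_half {τ : ℂ} (hτ : 0 < τ.im) {p q : ℤ} (hpq : IsCoprime p q) :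
    2 * wzeta τ ((p + q * τ) / 2) = p * eta1 τ + q * eta2 τ := by
  simpa [eta1, eta2, wzeta_eq_weierstrassZeta hτ, ofTau] using
    (ofTau τ hτ).two_mul_weierstrassZeta_half hpq

section Moebius

variable {a b c d : ℤ} (hdet : a * d - b * c = 1) {τ : ℂ} (hτ : 0 < τ.im)

include hdet hτ in
lemma moebius_denom_ne_zero : (c : ℂ) * τ + d ≠ 0 := by
  intro h
  have hc : c = 0 := by
    have : (c : ℝ) * τ.im = 0 := by simpa using congrArg Complex.im h
    exact_mod_cast (mul_eq_zero.mp this).resolve_right hτ.ne'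
  subst hc
  have hd : d = 0 := by exact_mod_cast (by simpa using h : (d : ℂ) = 0)
  simp [hd] at hdet

/-- `(cτ + d)(m + nτ') = (md + nb) + (mc + na)τ` for `τ' = (aτ + b)/(cτ + d)`. -/
def moebiusIndexEquiv : ℤ × ℤ ≃+ ℤ × ℤ where
  toFun ω := (ω.1 * d + ω.2 * b, ω.1 * c + ω.2 * a)
  invFun ω := (ω.1 * a - ω.2 * b, ω.2 * d - ω.1 * c)
  left_inv ω := by
    ext
    · linear_combination ω.1 * hdet
    · linear_combination ω.2 * hdet
  right_inv ω := by
    ext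
    · linear_combination ω.1 * hdet
    · linear_combination ω.2 * hdet
  map_add' ω ω' := by ext <;> dsimp only [Prod.fst_add, Prod.snd_add] <;> ring

include hτ in
lemma latticePt_moebius (ω : ℤ × ℤ) :
    latticePt (((a : ℂ) * τ + b) / ((c : ℂ) * τ + d)) ω =
      latticePt τ (moebiusIndexEquiv hdet ω) / ((c : ℂ) * τ + d) := by
  have hden := moebius_denom_ne_zero hdet hτ
  rw [eq_div_iff hden]
  simp only [latticePt, moebiusIndexEquiv, AddEquiv.coe_mk, Equiv.coe_fn_mk]
  rw [add_mul, mul_assoc, div_mul_cancel₀ _ hden]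
  push_cast
  ring

include hdet hτ in
lemma tsum_ite_latticePt_moebius (F : ℂ → ℂ) :
    ∑' ω : ℤ × ℤ, (if ω = 0 then 0 else F (latticePt (((a : ℂ) * τ + b) / ((c : ℂ) * τ + d)) ω)) =
      ∑' ω : ℤ × ℤ, (if ω = 0 then 0 else F (latticePt τ ω / ((c : ℂ) * τ + d))) := by
  rw [← (moebiusIndexEquiv hdet).toEquiv.tsum_eq
    (fun ω ↦ if ω = 0 then 0 else F (latticePt τ ω / ((c : ℂ) * τ + d)))]
  refine tsum_congr fun ω ↦ ?_
  simp [latticePt_moebius hdet hτ]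

include hdet hτ in
lemma moebius_denom_mul_point (r s : ℂ) :
    ((c : ℂ) * τ + d) *
      ((r * a - s * b) + (s * d - r * c) * (((a : ℂ) * τ + b) / ((c : ℂ) * τ + d))) = r + s * τ := by
  have hden := moebius_denom_ne_zero hdet hτ
  have hdet : (a : ℂ) * d - b * c = 1 := by exact_mod_cast hdet
  field_simp
  linear_combination (r + s * τ) * hdet

include hdet hτ in
lemma inLattice_moebius {w : ℂ} (hw : InLattice (((a : ℂ) * τ + b) / ((c : ℂ) * τ + d)) w) :
    InLattice τ (((c : ℂ) * τ + d) * w) := by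
  obtain ⟨m, n, rfl⟩ := hw
  refine ⟨(moebiusIndexEquiv hdet (m, n)).1, (moebiusIndexEquiv hdet (m, n)).2, ?_⟩
  have := latticePt_moebius hdet hτ (m, n)
  simp only [latticePt] at this
  rw [this, mul_div_cancel₀ _ (moebius_denom_ne_zero hdet hτ)]

include hdet hτ in
lemma wzeta_moebius (z : ℂ) :
    wzeta (((a : ℂ) * τ + b) / ((c : ℂ) * τ + d)) z =
      ((c : ℂ) * τ + d) * wzeta τ (((c : ℂ) * τ + d) * z) := by
  have hden := moebius_denom_ne_zero hdet hτ
  rw [wzeta, wzeta, tsum_ite_latticePt_moebius hdet hτ (fun x ↦ 1 / (z - x) + 1 / x + z / x ^ 2),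
    mul_add, ← tsum_mul_left]
  congr 1
  · rw [mul_one_div, ← div_div, div_self hden]
  · refine tsum_congr fun ω ↦ ?_
    split_ifs
    · simp
    · rw [show z - latticePt τ ω / ((c : ℂ) * τ + d) = (((c : ℂ) * τ + d) * z - latticePt τ ω) /
          ((c : ℂ) * τ + d) by field_simp, one_div_div, one_div_div, div_pow, div_div_eq_mul_div]
      ring

include hdet hτ in
lemma wp_moebius (z : ℂ) :
    wp (((a : ℂ) * τ + b) / ((c : ℂ) * τ + d)) z =
      ((c : ℂ) * τ + d) ^ 2 * wp τ (((c : ℂ) * τ + d) * z) := by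
  have hden := moebius_denom_ne_zero hdet hτ
  rw [wp, wp, tsum_ite_latticePt_moebius hdet hτ (fun x ↦ 1 / (z - x) ^ 2 - 1 / x ^ 2),
    mul_add, ← tsum_mul_left]
  congr 1
  · rw [mul_pow, mul_one_div, ← div_div, div_self (pow_ne_zero 2 hden)]
  · refine tsum_congr fun ω ↦ ?_
    split_ifs
    · simp
    · rw [show z - latticePt τ ω / ((c : ℂ) * τ + d) = (((c : ℂ) * τ + d) * z - latticePt τ ω) /
          ((c : ℂ) * τ + d) by field_simp, div_pow, div_pow, one_div_div, one_div_div]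
      ring

include hdet hτ in
lemma wpDeriv_moebius (z : ℂ) :
    wpDeriv (((a : ℂ) * τ + b) / ((c : ℂ) * τ + d)) z =
      ((c : ℂ) * τ + d) ^ 3 * wpDeriv τ (((c : ℂ) * τ + d) * z) := by
  rw [wpDeriv, wpDeriv, funext (wp_moebius hdet hτ), deriv_const_mul_field, deriv_comp_mul_left,
    smul_eq_mul]
  ring

include hdet hτ in
lemma eta1_moebius :
    eta1 (((a : ℂ) * τ + b) / ((c : ℂ) * τ + d)) =
      ((c : ℂ) * τ + d) * (d * eta1 τ + c * eta2 τ) := by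
  rw [eta1, wzeta_moebius hdet hτ,
    ← two_mul_wzeta_half hτ (show IsCoprime d c from ⟨a, -b, by linear_combination hdet⟩)]
  ring_nf

include hdet hτ in
lemma eta2_moebius :
    eta2 (((a : ℂ) * τ + b) / ((c : ℂ) * τ + d)) =
      ((c : ℂ) * τ + d) * (b * eta1 τ + a * eta2 τ) := by
  have hden := moebius_denom_ne_zero hdet hτ
  rw [eta2, wzeta_moebius hdet hτ,
    ← two_mul_wzeta_half hτ (show IsCoprime b a from ⟨-c, d, by linear_combination hdet⟩),
    show ((c : ℂ) * τ + d) * (((a : ℂ) * τ + b) / ((c : ℂ) * τ + d) / 2) = (b + a * τ) / 2 by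
      field_simp; ring]
  ring

include hdet hτ in
lemma Zrs_moebius (r s : ℂ) :
    Zrs (r * a - s * b) (s * d - r * c) (((a : ℂ) * τ + b) / ((c : ℂ) * τ + d)) =
      ((c : ℂ) * τ + d) * Zrs r s τ := by
  rw [Zrs, Zrs, wzeta_moebius hdet hτ, moebius_denom_mul_point hdet hτ, eta1_moebius hdet hτ,
    eta2_moebius hdet hτ]
  have hdet : (a : ℂ) * d - b * c = 1 := by exact_mod_cast hdet
  linear_combination -((c * τ + d) * (r * eta1 τ + s * eta2 τ)) * hdet

end Moebius

end

/-- The modular transformation law (2.16) for `Z^{(2)}_{r,s}`: for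
`γ = [[a,b],[c,d]] ∈ SL(2,ℤ)`, `τ' = γ·τ` and `(s',r') = (s,r)·γ⁻¹`, if `r + sτ ∉ Λ_τ` then
`r' + s'τ' ∉ Λ_{τ'}` and `Z^{(2)}_{r',s'}(τ') = (cτ+d)³ Z^{(2)}_{r,s}(τ)`. -/
theorem Z2_modular (a b c d : ℤ) (hdet : a * d - b * c = 1) (τ : ℂ) (hτ : 0 < τ.im)
    (r s : ℂ) (hα : ¬InLattice τ (r + s * τ)) :
    ¬InLattice (((a : ℂ) * τ + b) / ((c : ℂ) * τ + d))
        ((r * a - s * b) + (s * d - r * c) * (((a : ℂ) * τ + b) / ((c : ℂ) * τ + d))) ∧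
      Z2 (r * a - s * b) (s * d - r * c) (((a : ℂ) * τ + b) / ((c : ℂ) * τ + d))
        = ((c : ℂ) * τ + d) ^ 3 * Z2 r s τ := by
  have hpoint := moebius_denom_mul_point hdet hτ r s
  refine ⟨fun h ↦ hα (hpoint ▸ inLattice_moebius hdet hτ h), ?_⟩
  rw [Z2, Z2, Zrs_moebius hdet hτ, wp_moebius hdet hτ, wpDeriv_moebius hdet hτ, hpoint]
  ring
end

section
/- Let N ≥ 3 be an integer, γ = [[a,b],[c,d]] ∈ SL(2,ℤ) and τ ∈ ℍ. Then M_N(γ·τ) = (cτ+d)^{3·#Q_N} · M_N(τ). -/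
/-!
`ζ` and `℘` are lattice sums of rational summands. Translating `z` by a lattice point `E` and
reindexing the sum shows that `℘` is periodic and that `ζ(z + E) - ζ(z)` does not depend on `z`;
as `ζ` is odd, evaluating at `z = -E/2` identifies the difference with `2ζ(E/2)`. Hence
`ζ(z + m + nτ) = ζ(z) + m η₁ + n η₂`, so `Z_{r,s}` and `Z^{(2)}_{r,s}` only depend on `(r, s)`
mod `ℤ²`. Passing from `τ` to `γτ` divides the lattice by `cτ + d` and changes its basis, so `ζ`,
`℘`, `℘'` pick up the factors `(cτ + d)`, `(cτ + d)²`, `(cτ + d)³`, while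
`η₁(γτ) = (cτ + d)(d η₁ + c η₂)` and `η₂(γτ) = (cτ + d)(b η₁ + a η₂)`. Together,
`Z^{(2)}_{r,s}(γτ) = (cτ + d)³ Z^{(2)}_{rd + sb, rc + sa}(τ)`. Finally
`(r, s) ↦ (rd + sb, rc + sa)` permutes `Q_N` modulo `ℤ²`, because `γ` is invertible mod `N`.
-/

open Complex

/-- The set `Q_N` of `N`-torsion pairs `(k₁/N, k₂/N)`, indexed by the numerators
`(k₁, k₂)` with `0 ≤ k₁, k₂ ≤ N − 1` and `gcd(k₁, k₂, N) = 1`. -/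
def QN (N : ℕ) : Finset (ℕ × ℕ) :=
  (Finset.range N ×ˢ Finset.range N).filter fun k => Nat.gcd k.1 (Nat.gcd k.2 N) = 1

/-- The modular form `M_N(τ) = ∏_{(r,s) ∈ Q_N} Z^{(2)}_{r,s}(τ)`. -/
noncomputable def MN (N : ℕ) (τ : ℂ) : ℂ :=
  ∏ k ∈ QN N, Z2 ((k.1 : ℂ) / N) ((k.2 : ℂ) / N) τ

open Filter Asymptotics Bornology

section Lattice

open EisensteinSeries

lemma latticePt_add (τ : ℂ) (ω ω' : ℤ × ℤ) :
    latticePt τ (ω + ω') = latticePt τ ω + latticePt τ ω' := by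
  simp only [latticePt, Prod.fst_add, Prod.snd_add, Int.cast_add]; ring

lemma latticePt_neg (τ : ℂ) (ω : ℤ × ℤ) : latticePt τ (-ω) = -latticePt τ ω := by
  simp only [latticePt, Prod.fst_neg, Prod.snd_neg, Int.cast_neg]; ring

@[simp] lemma latticePt_zero (τ : ℂ) : latticePt τ 0 = 0 := by simp [latticePt]

/-- Matches `latticePt τ (m, n) = m + nτ` with the Eisenstein-series point `v 0 * τ + v 1`,
`v = ![n, m]`. -/
def latticeIndexEquiv : ℤ × ℤ ≃ (Fin 2 → ℤ) :=
  (Equiv.prodComm ℤ ℤ).trans (finTwoArrowEquiv ℤ).symm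

lemma latticePt_eq_latticeIndexEquiv (τ : ℂ) (ω : ℤ × ℤ) :
    latticePt τ ω = latticeIndexEquiv ω 0 * τ + latticeIndexEquiv ω 1 := by
  simp only [latticePt, latticeIndexEquiv, Equiv.trans_apply, Equiv.prodComm_apply,
    Prod.fst_swap, Prod.snd_swap, finTwoArrowEquiv_symm_apply, Matrix.cons_val_zero,
    Matrix.cons_val_one]
  ring

variable {τ : ℂ}

lemma latticePt_ne_zero (hτ : 0 < τ.im) {ω : ℤ × ℤ} (hω : ω ≠ 0) : latticePt τ ω ≠ 0 := by
  have h0 : latticeIndexEquiv 0 = 0 := by ext i; fin_cases i <;> rfl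
  have hv : latticeIndexEquiv ω ≠ 0 := h0 ▸ latticeIndexEquiv.injective.ne hω
  have := r_mul_max_le ⟨τ, hτ⟩ hv
  rw [latticePt_eq_latticeIndexEquiv, ← norm_pos_iff]
  exact (mul_pos (r_pos _) (norm_pos_iff.2 hv)).trans_le this

lemma tendsto_latticePt_cofinite (hτ : 0 < τ.im) :
    Tendsto (latticePt τ) cofinite (cobounded ℂ) := by
  have hnorm : Tendsto (‖·‖) (cofinite : Filter (Fin 2 → ℤ)) atTop := by
    simpa [cocompact_eq_cofinite] using tendsto_norm_cocompact_atTop (E := Fin 2 → ℤ)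
  have hv : Tendsto (fun v : Fin 2 → ℤ => ‖(v 0 * τ + v 1 : ℂ)‖) cofinite atTop := by
    refine tendsto_atTop_mono' _ ?_ (hnorm.const_mul_atTop (r_pos ⟨τ, hτ⟩))
    filter_upwards [eventually_cofinite_ne 0] with v hv using r_mul_max_le _ hv
  rw [← tendsto_norm_atTop_iff_cobounded]
  simpa [Function.comp_def, latticePt_eq_latticeIndexEquiv] using
    hv.comp latticeIndexEquiv.injective.tendsto_cofinite

lemma summable_inv_latticePt_pow_three (hτ : 0 < τ.im) :
    Summable fun ω => ‖(latticePt τ ω)⁻¹ ^ 3‖ := by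
  have := (summable_norm_eisSummand (k := 3) le_rfl ⟨τ, hτ⟩).comp_injective
    latticeIndexEquiv.injective
  simpa [Function.comp_def, eisSummand, latticePt_eq_latticeIndexEquiv, zpow_neg] using this

lemma summable_comp_latticePt (hτ : 0 < τ.im) {f : ℂ → ℂ}
    (hf : f =O[cobounded ℂ] fun u => u⁻¹ ^ 3) :
    Summable fun ω => f (latticePt τ ω) :=
  summable_of_isBigO (summable_inv_latticePt_pow_three hτ)
    ((hf.comp_tendsto (tendsto_latticePt_cofinite hτ)).norm_right)

end Lattice

section Summands

/-- At `u = 0` this is the principal part `1 / z` of `wzeta`, since `1 / 0 = 0`. -/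
noncomputable def zetaSummand (z u : ℂ) : ℂ := 1 / (z - u) + 1 / u + z / u ^ 2

/-- At `u = 0` this is the principal part `1 / z ^ 2` of `wp`, since `1 / 0 = 0`. -/
noncomputable def wpSummand (z u : ℂ) : ℂ := 1 / (z - u) ^ 2 - 1 / u ^ 2

lemma norm_div_sub_le_two {z u : ℂ} (h : 2 * ‖z‖ ≤ ‖u‖) : ‖u / (z - u)‖ ≤ 2 := by
  have hzu : ‖u‖ ≤ 2 * ‖z - u‖ := by
    have := norm_sub_norm_le u z
    rw [norm_sub_rev] at this
    linarith
  rw [norm_div]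
  exact div_le_of_le_mul₀ (norm_nonneg _) zero_le_two hzu

lemma eventually_cobounded_ne_and_le (z : ℂ) :
    ∀ᶠ u in cobounded ℂ, u ≠ 0 ∧ z - u ≠ 0 ∧ 2 * ‖z‖ ≤ ‖u‖ := by
  filter_upwards [eventually_cobounded_le_norm (2 * ‖z‖ + 1)] with u hu
  have hu0 : 0 < ‖u‖ := by linarith [norm_nonneg z]
  refine ⟨norm_pos_iff.1 hu0, fun h => ?_, by linarith⟩
  rw [sub_eq_zero] at h
  rw [← h] at hu
  linarith [norm_nonneg z]

lemma zetaSummand_isBigO (z : ℂ) : zetaSummand z =O[cobounded ℂ] fun u => u⁻¹ ^ 3 := by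
  refine IsBigO.of_bound (2 * ‖z‖ ^ 2) ?_
  filter_upwards [eventually_cobounded_ne_and_le z] with u ⟨hu, hzu, h⟩
  have hw := norm_div_sub_le_two h
  have : zetaSummand z u = z ^ 2 * u⁻¹ ^ 3 * (u / (z - u)) := by
    unfold zetaSummand; field_simp; ring
  rw [this]
  calc ‖z ^ 2 * u⁻¹ ^ 3 * (u / (z - u))‖ ≤ ‖z ^ 2 * u⁻¹ ^ 3‖ * 2 := by
        rw [norm_mul]; gcongr
    _ = 2 * ‖z‖ ^ 2 * ‖u⁻¹ ^ 3‖ := by rw [norm_mul, norm_pow]; ring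

lemma wpSummand_isBigO (z : ℂ) : wpSummand z =O[cobounded ℂ] fun u => u⁻¹ ^ 3 := by
  refine IsBigO.of_bound (6 * ‖z‖) ?_
  filter_upwards [eventually_cobounded_ne_and_le z] with u ⟨hu, hzu, h⟩
  set w := u / (z - u)
  have hw : ‖w‖ ≤ 2 := norm_div_sub_le_two h
  have hw1 : ‖w - 1‖ ≤ 3 := (norm_sub_le _ _).trans (by rw [norm_one]; linarith)
  have : wpSummand z u = z * u⁻¹ ^ 3 * (w * (w - 1)) := by
    unfold wpSummand w; field_simp; ring
  rw [this]
  calc ‖z * u⁻¹ ^ 3 * (w * (w - 1))‖ ≤ ‖z * u⁻¹ ^ 3‖ * (2 * 3) := by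
        rw [norm_mul, norm_mul w]; gcongr
    _ = 6 * ‖z‖ * ‖u⁻¹ ^ 3‖ := by rw [norm_mul]; ring

end Summands

section LatticeSum

variable {τ : ℂ}

/-- The form of `wzeta` and `wp`; unlike the plain `tsum` it can be reindexed without knowing
summability. -/
noncomputable def latticeSum (τ : ℂ) (F : ℂ → ℂ) : ℂ :=
  F 0 + ∑' ω : ℤ × ℤ, if ω = 0 then 0 else F (latticePt τ ω)

lemma wzeta_eq_latticeSum (τ z : ℂ) : wzeta τ z = latticeSum τ (zetaSummand z) := by
  simp [wzeta, latticeSum, zetaSummand]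

lemma wp_eq_latticeSum (τ z : ℂ) : wp τ z = latticeSum τ (wpSummand z) := by
  simp [wp, latticeSum, wpSummand]

lemma latticeSum_eq_tsum {F : ℂ → ℂ} (hF : Summable fun ω => F (latticePt τ ω)) :
    latticeSum τ F = ∑' ω, F (latticePt τ ω) := by
  rw [hF.tsum_eq_add_tsum_ite 0, latticeSum, latticePt_zero]

lemma latticeSum_const_mul (c : ℂ) (F : ℂ → ℂ) :
    latticeSum τ (fun u => c * F u) = c * latticeSum τ F := by
  simp only [latticeSum, mul_add, ← tsum_mul_left, mul_ite, mul_zero]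

lemma tsum_comp_latticePt_add (F : ℂ → ℂ) (e : ℤ × ℤ) :
    ∑' ω, F (latticePt τ ω + latticePt τ e) = ∑' ω, F (latticePt τ ω) := by
  simpa only [Equiv.coe_addRight, latticePt_add] using
    (Equiv.addRight e).tsum_eq fun ω => F (latticePt τ ω)

lemma tsum_comp_neg_latticePt (F : ℂ → ℂ) :
    ∑' ω, F (-latticePt τ ω) = ∑' ω, F (latticePt τ ω) := by
  simpa only [Equiv.neg_apply, latticePt_neg] using
    (Equiv.neg (ℤ × ℤ)).tsum_eq fun ω => F (latticePt τ ω)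

lemma summable_zetaSummand (hτ : 0 < τ.im) (z : ℂ) :
    Summable fun ω => zetaSummand z (latticePt τ ω) :=
  summable_comp_latticePt hτ (zetaSummand_isBigO z)

lemma summable_wpSummand (hτ : 0 < τ.im) (z : ℂ) :
    Summable fun ω => wpSummand z (latticePt τ ω) :=
  summable_comp_latticePt hτ (wpSummand_isBigO z)

lemma wzeta_eq_tsum (hτ : 0 < τ.im) (z : ℂ) :
    wzeta τ z = ∑' ω, zetaSummand z (latticePt τ ω) := by
  rw [wzeta_eq_latticeSum, latticeSum_eq_tsum (summable_zetaSummand hτ z)]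

lemma wp_eq_tsum (hτ : 0 < τ.im) (z : ℂ) : wp τ z = ∑' ω, wpSummand z (latticePt τ ω) := by
  rw [wp_eq_latticeSum, latticeSum_eq_tsum (summable_wpSummand hτ z)]

end LatticeSum

section Periodicity

variable {τ : ℂ}

lemma zetaSummand_neg (z u : ℂ) : zetaSummand (-z) (-u) = -zetaSummand z u := by
  simp only [zetaSummand, neg_sub_neg, ← neg_sub z u, div_neg, neg_sq]; ring

lemma zetaSummand_add_add (z u E : ℂ) :
    zetaSummand (z + E) (u + E)
      = zetaSummand z u - zetaSummand (-E) u + (z + E) * wpSummand (-E) u := by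
  simp only [zetaSummand, wpSummand, ← neg_add', div_neg, neg_sq, add_sub_add_right_eq_sub]
  ring

lemma wpSummand_add_add (z u E : ℂ) :
    wpSummand (z + E) (u + E) = wpSummand z u - wpSummand (-E) u := by
  simp only [wpSummand, ← neg_add', neg_sq, add_sub_add_right_eq_sub]; ring

lemma wpSummand_neg_neg_add (u E : ℂ) : wpSummand (-E) (-(u + E)) = -wpSummand (-E) u := by
  simp only [wpSummand, ← neg_add', neg_sq]; ring

lemma wzeta_neg (hτ : 0 < τ.im) (z : ℂ) : wzeta τ (-z) = -wzeta τ z := by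
  rw [wzeta_eq_tsum hτ, wzeta_eq_tsum hτ, ← tsum_comp_neg_latticePt]
  simp_rw [zetaSummand_neg, tsum_neg]

/-- The sum vanishes because `u ↦ -(u + E)` permutes the lattice and flips the sign of the
summand. -/
lemma tsum_wpSummand_neg_latticePt (e : ℤ × ℤ) :
    ∑' ω, wpSummand (-latticePt τ e) (latticePt τ ω) = 0 := by
  set S := ∑' ω, wpSummand (-latticePt τ e) (latticePt τ ω)
  have hS : S = -S := by
    calc S = ∑' ω, wpSummand (-latticePt τ e) (-(latticePt τ ω + latticePt τ e)) := by
          rw [tsum_comp_latticePt_add (fun u => wpSummand _ (-u)), tsum_comp_neg_latticePt]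
      _ = -S := by simp_rw [wpSummand_neg_neg_add, tsum_neg]; rfl
  linear_combination hS / 2

/-- `wzeta τ (latticePt τ e)` is the value at a pole given by the convention `1 / 0 = 0`. -/
lemma wzeta_add_latticePt_eq_add (hτ : 0 < τ.im) (z : ℂ) (e : ℤ × ℤ) :
    wzeta τ (z + latticePt τ e) = wzeta τ z + wzeta τ (latticePt τ e) := by
  set E := latticePt τ e
  calc wzeta τ (z + E)
      = ∑' ω, (zetaSummand z (latticePt τ ω) - zetaSummand (-E) (latticePt τ ω)
          + (z + E) * wpSummand (-E) (latticePt τ ω)) := by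
        rw [wzeta_eq_tsum hτ, ← tsum_comp_latticePt_add (zetaSummand (z + E)) e]
        exact tsum_congr fun ω => zetaSummand_add_add _ _ _
    _ = wzeta τ z - wzeta τ (-E) := by
        have hz := summable_zetaSummand hτ z
        have hE := summable_zetaSummand hτ (-E)
        rw [(hz.sub hE).tsum_add ((summable_wpSummand hτ (-E)).mul_left (z + E)),
          hz.tsum_sub hE, tsum_mul_left, tsum_wpSummand_neg_latticePt, mul_zero, add_zero,
          ← wzeta_eq_tsum hτ, ← wzeta_eq_tsum hτ]
    _ = wzeta τ z + wzeta τ E := by rw [wzeta_neg hτ, sub_neg_eq_add]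

lemma wp_add_latticePt (hτ : 0 < τ.im) (z : ℂ) (e : ℤ × ℤ) :
    wp τ (z + latticePt τ e) = wp τ z := by
  rw [wp_eq_tsum hτ, wp_eq_tsum hτ,
    ← tsum_comp_latticePt_add (wpSummand (z + latticePt τ e)) e,
    tsum_congr fun ω => wpSummand_add_add _ _ _,
    (summable_wpSummand hτ z).tsum_sub (summable_wpSummand hτ _), tsum_wpSummand_neg_latticePt,
    sub_zero]

lemma wpDeriv_add_latticePt (hτ : 0 < τ.im) (z : ℂ) (e : ℤ × ℤ) :
    wpDeriv τ (z + latticePt τ e) = wpDeriv τ z := by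
  rw [wpDeriv, wpDeriv, ← deriv_comp_add_const]
  simp only [wp_add_latticePt hτ]

lemma two_mul_wzeta_half_latticePt (hτ : 0 < τ.im) (e : ℤ × ℤ) :
    2 * wzeta τ (latticePt τ e / 2) = wzeta τ (latticePt τ e) := by
  have h := wzeta_add_latticePt_eq_add hτ (-(latticePt τ e / 2)) e
  rw [neg_add_eq_sub, sub_half, wzeta_neg hτ] at h
  linear_combination h

/-- `ω ↦ wzeta τ (latticePt τ ω)` is additive, so it is determined by its values
`eta1 τ, eta2 τ` on the basis. -/
lemma wzeta_latticePt (hτ : 0 < τ.im) (ω : ℤ × ℤ) :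
    wzeta τ (latticePt τ ω) = ω.1 * eta1 τ + ω.2 * eta2 τ := by
  let φ : ℤ × ℤ →+ ℂ := AddMonoidHom.mk' (fun ω => wzeta τ (latticePt τ ω))
    fun ω ω' => by rw [latticePt_add, wzeta_add_latticePt_eq_add hτ]
  have h₁ : eta1 τ = φ (1, 0) := by
    simpa [eta1, latticePt, φ] using two_mul_wzeta_half_latticePt hτ (1, 0)
  have h₂ : eta2 τ = φ (0, 1) := by
    simpa [eta2, latticePt, φ] using two_mul_wzeta_half_latticePt hτ (0, 1)
  have hω : ω = ω.1 • (1, 0) + ω.2 • (0, 1) := by ext <;> simp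
  calc wzeta τ (latticePt τ ω) = φ (ω.1 • (1, 0) + ω.2 • (0, 1)) := by rw [← hω]; rfl
    _ = ω.1 * eta1 τ + ω.2 * eta2 τ := by
      rw [map_add, map_zsmul, map_zsmul, h₁, h₂, zsmul_eq_mul, zsmul_eq_mul]

lemma wzeta_add_latticePt (hτ : 0 < τ.im) (z : ℂ) (ω : ℤ × ℤ) :
    wzeta τ (z + latticePt τ ω) = wzeta τ z + ω.1 * eta1 τ + ω.2 * eta2 τ := by
  rw [wzeta_add_latticePt_eq_add hτ, wzeta_latticePt hτ, add_assoc]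

lemma add_intCast_add_intCast_mul (r s τ : ℂ) (m n : ℤ) :
    r + m + (s + n) * τ = r + s * τ + latticePt τ (m, n) := by
  rw [latticePt]; ring

lemma Zrs_add_intCast (hτ : 0 < τ.im) (r s : ℂ) (m n : ℤ) :
    Zrs (r + m) (s + n) τ = Zrs r s τ := by
  rw [Zrs, Zrs, add_intCast_add_intCast_mul, wzeta_add_latticePt hτ]
  ring

lemma Z2_add_intCast (hτ : 0 < τ.im) (r s : ℂ) (m n : ℤ) :
    Z2 (r + m) (s + n) τ = Z2 r s τ := by
  rw [Z2, Z2, Zrs_add_intCast hτ, add_intCast_add_intCast_mul, wp_add_latticePt hτ,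
    wpDeriv_add_latticePt hτ]

end Periodicity

section Modular

variable {τ : ℂ} {a b c d : ℤ}

def unimodularEquiv (a b c d : ℤ) (hdet : a * d - b * c = 1) : ℤ × ℤ ≃+ ℤ × ℤ where
  toFun ω := (d * ω.1 + b * ω.2, c * ω.1 + a * ω.2)
  invFun ω := (a * ω.1 - b * ω.2, -(c * ω.1) + d * ω.2)
  left_inv ω := Prod.ext (by linear_combination ω.1 * hdet) (by linear_combination ω.2 * hdet)
  right_inv ω := Prod.ext (by linear_combination ω.1 * hdet) (by linear_combination ω.2 * hdet)
  map_add' ω ω' := Prod.ext (by simp only [Prod.fst_add, Prod.snd_add]; ring)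
    (by simp only [Prod.fst_add, Prod.snd_add]; ring)

lemma denom_ne_zero (hτ : 0 < τ.im) (hdet : a * d - b * c = 1) : (c : ℂ) * τ + d ≠ 0 := by
  have hdc : ((d, c) : ℤ × ℤ) ≠ 0 := by
    rintro h
    simp only [Prod.mk_eq_zero] at h
    simp [h.1, h.2] at hdet
  simpa [latticePt, add_comm] using latticePt_ne_zero hτ hdc

lemma latticePt_smul (hdet : a * d - b * c = 1) (hden : (c : ℂ) * τ + d ≠ 0) (ω : ℤ × ℤ) :
    latticePt ((a * τ + b) / (c * τ + d)) ω
      = latticePt τ (unimodularEquiv a b c d hdet ω) / (c * τ + d) := by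
  simp only [latticePt, unimodularEquiv, AddEquiv.coe_mk, Equiv.coe_fn_mk, Int.cast_add,
    Int.cast_mul]
  rw [eq_div_iff hden, add_mul, mul_assoc, div_mul_cancel₀ _ hden]
  ring

lemma latticeSum_smul (hdet : a * d - b * c = 1) (hden : (c : ℂ) * τ + d ≠ 0) (F : ℂ → ℂ) :
    latticeSum ((a * τ + b) / (c * τ + d)) F = latticeSum τ fun u => F (u / (c * τ + d)) := by
  rw [latticeSum, latticeSum, zero_div,
    ← (unimodularEquiv a b c d hdet).toEquiv.tsum_eq
      fun ω => if ω = 0 then 0 else F (latticePt τ ω / (c * τ + d))]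
  congr 1
  refine tsum_congr fun ω => ?_
  simp only [AddEquiv.toEquiv_eq_coe, EquivLike.coe_coe, AddEquiv.map_eq_zero_iff,
    latticePt_smul hdet hden]

lemma zetaSummand_div {l : ℂ} (hl : l ≠ 0) (z u : ℂ) :
    zetaSummand z (u / l) = l * zetaSummand (l * z) u := by
  rw [zetaSummand, zetaSummand, show z - u / l = (l * z - u) / l by field_simp, one_div_div,
    one_div_div, div_pow, div_div_eq_mul_div]
  ring

lemma wpSummand_div {l : ℂ} (hl : l ≠ 0) (z u : ℂ) :
    wpSummand z (u / l) = l ^ 2 * wpSummand (l * z) u := by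
  rw [wpSummand, wpSummand, show z - u / l = (l * z - u) / l by field_simp, div_pow, div_pow,
    one_div_div, one_div_div]
  ring

lemma wzeta_smul (hdet : a * d - b * c = 1) (hden : (c : ℂ) * τ + d ≠ 0) (z : ℂ) :
    wzeta ((a * τ + b) / (c * τ + d)) z = (c * τ + d) * wzeta τ ((c * τ + d) * z) := by
  simp only [wzeta_eq_latticeSum, latticeSum_smul hdet hden, zetaSummand_div hden,
    latticeSum_const_mul]

lemma wp_smul (hdet : a * d - b * c = 1) (hden : (c : ℂ) * τ + d ≠ 0) (z : ℂ) :
    wp ((a * τ + b) / (c * τ + d)) z = (c * τ + d) ^ 2 * wp τ ((c * τ + d) * z) := by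
  simp only [wp_eq_latticeSum, latticeSum_smul hdet hden, wpSummand_div hden,
    latticeSum_const_mul]

lemma wpDeriv_smul (hdet : a * d - b * c = 1) (hden : (c : ℂ) * τ + d ≠ 0) (z : ℂ) :
    wpDeriv ((a * τ + b) / (c * τ + d)) z = (c * τ + d) ^ 3 * wpDeriv τ ((c * τ + d) * z) := by
  rw [wpDeriv, funext (wp_smul hdet hden), deriv_const_mul_field, deriv_comp_mul_left, wpDeriv,
    smul_eq_mul]
  ring

lemma eta1_smul (hτ : 0 < τ.im) (hdet : a * d - b * c = 1) :
    eta1 ((a * τ + b) / (c * τ + d)) = (c * τ + d) * (d * eta1 τ + c * eta2 τ) := by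
  have h : ((c : ℂ) * τ + d) * (1 / 2) = latticePt τ (d, c) / 2 := by rw [latticePt]; ring
  rw [eta1, wzeta_smul hdet (denom_ne_zero hτ hdet), h, mul_left_comm,
    two_mul_wzeta_half_latticePt hτ, wzeta_latticePt hτ]

lemma eta2_smul (hτ : 0 < τ.im) (hdet : a * d - b * c = 1) :
    eta2 ((a * τ + b) / (c * τ + d)) = (c * τ + d) * (b * eta1 τ + a * eta2 τ) := by
  have hden := denom_ne_zero hτ hdet
  have h : ((c : ℂ) * τ + d) * ((a * τ + b) / (c * τ + d) / 2) = latticePt τ (b, a) / 2 := by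
    rw [latticePt]; field_simp; ring
  rw [eta2, wzeta_smul hdet hden, h, mul_left_comm, two_mul_wzeta_half_latticePt hτ,
    wzeta_latticePt hτ]

lemma denom_mul_add_mul_smul (hden : (c : ℂ) * τ + d ≠ 0) (r s : ℂ) :
    (c * τ + d) * (r + s * ((a * τ + b) / (c * τ + d)))
      = r * d + s * b + (r * c + s * a) * τ := by
  field_simp
  ring

lemma Zrs_smul (hτ : 0 < τ.im) (hdet : a * d - b * c = 1) (r s : ℂ) :
    Zrs r s ((a * τ + b) / (c * τ + d))
      = (c * τ + d) * Zrs (r * d + s * b) (r * c + s * a) τ := by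
  have hden := denom_ne_zero hτ hdet
  rw [Zrs, Zrs, wzeta_smul hdet hden, denom_mul_add_mul_smul hden, eta1_smul hτ hdet,
    eta2_smul hτ hdet]
  ring

lemma Z2_smul (hτ : 0 < τ.im) (hdet : a * d - b * c = 1) (r s : ℂ) :
    Z2 r s ((a * τ + b) / (c * τ + d))
      = (c * τ + d) ^ 3 * Z2 (r * d + s * b) (r * c + s * a) τ := by
  have hden := denom_ne_zero hτ hdet
  rw [Z2, Z2, Zrs_smul hτ hdet, wp_smul hdet hden, wpDeriv_smul hdet hden,
    denom_mul_add_mul_smul hden]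
  ring

end Modular

section TorsionPoints

variable {N : ℕ}

lemma mem_QN {k : ℕ × ℕ} :
    k ∈ QN N ↔ k.1 < N ∧ k.2 < N ∧ Nat.gcd k.1 (Nat.gcd k.2 N) = 1 := by
  simp [QN, and_assoc]

/-- Reduce mod `g = gcd(j₁, j₂, N)`: the right-hand sides vanish in `ZMod g`. -/
lemma gcd_dvd_gcd_of_natCast_eq {j₁ j₂ k₁ k₂ : ℕ} {p q r s : ℤ}
    (h₁ : (k₁ : ZMod N) = p * j₁ + q * j₂) (h₂ : (k₂ : ZMod N) = r * j₁ + s * j₂) :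
    Nat.gcd j₁ (Nat.gcd j₂ N) ∣ Nat.gcd k₁ (Nat.gcd k₂ N) := by
  set g := Nat.gcd j₁ (Nat.gcd j₂ N)
  have hgN : g ∣ N := (Nat.gcd_dvd_right _ _).trans (Nat.gcd_dvd_right _ _)
  have hj₁ : (j₁ : ZMod g) = 0 := (ZMod.natCast_eq_zero_iff _ _).2 (Nat.gcd_dvd_left _ _)
  have hj₂ : (j₂ : ZMod g) = 0 :=
    (ZMod.natCast_eq_zero_iff _ _).2 ((Nat.gcd_dvd_right _ _).trans (Nat.gcd_dvd_left _ _))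
  have hk : ∀ {k : ℕ} {x y : ℤ}, (k : ZMod N) = x * j₁ + y * j₂ → g ∣ k := fun h => by
    have := congrArg (ZMod.castHom hgN (ZMod g)) h
    simp only [map_natCast, map_add, map_mul, map_intCast, hj₁, hj₂, mul_zero, add_zero] at this
    exact (ZMod.natCast_eq_zero_iff _ _).1 this
  exact Nat.dvd_gcd (hk h₁) (Nat.dvd_gcd (hk h₂) hgN)

/-- Since `(cτ + d)(r + s·γτ) = (rd + sb) + (rc + sa)τ`, the pair `(r, s) = k / N` at `γτ`
corresponds to the numerators `(d k₁ + b k₂, c k₁ + a k₂)` at `τ`, here reduced mod `N`. -/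
def actMod (N : ℕ) (a b c d : ℤ) (k : ℕ × ℕ) : ℕ × ℕ :=
  (((d * k.1 + b * k.2 : ℤ) : ZMod N).val, ((c * k.1 + a * k.2 : ℤ) : ZMod N).val)

variable [NeZero N]

lemma natCast_actMod_fst (a b c d : ℤ) (k : ℕ × ℕ) :
    ((actMod N a b c d k).1 : ZMod N) = ((d * k.1 + b * k.2 : ℤ) : ZMod N) :=
  ZMod.natCast_zmod_val _

lemma natCast_actMod_snd (a b c d : ℤ) (k : ℕ × ℕ) :
    ((actMod N a b c d k).2 : ZMod N) = ((c * k.1 + a * k.2 : ℤ) : ZMod N) :=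
  ZMod.natCast_zmod_val _

variable {a b c d : ℤ}

lemma natCast_eq_of_actMod (hdet : a * d - b * c = 1) (k : ℕ × ℕ) :
    (k.1 : ZMod N)
        = a * (actMod N a b c d k).1 + ((-b : ℤ) : ZMod N) * (actMod N a b c d k).2 ∧
      (k.2 : ZMod N)
        = ((-c : ℤ) : ZMod N) * (actMod N a b c d k).1 + d * (actMod N a b c d k).2 := by
  have hdet' : (a * d - b * c : ZMod N) = 1 := by
    exact_mod_cast congrArg (Int.cast (R := ZMod N)) hdet
  rw [natCast_actMod_fst, natCast_actMod_snd]
  push_cast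
  constructor
  · linear_combination -(k.1 : ZMod N) * hdet'
  · linear_combination -(k.2 : ZMod N) * hdet'

lemma actMod_mem_QN (hdet : a * d - b * c = 1) {k : ℕ × ℕ} (hk : k ∈ QN N) :
    actMod N a b c d k ∈ QN N := by
  obtain ⟨-, -, hgcd⟩ := mem_QN.1 hk
  obtain ⟨h₁, h₂⟩ := natCast_eq_of_actMod (N := N) hdet k
  exact mem_QN.2 ⟨ZMod.val_lt _, ZMod.val_lt _,
    Nat.dvd_one.1 (hgcd ▸ gcd_dvd_gcd_of_natCast_eq h₁ h₂)⟩

lemma actMod_inv_actMod (hdet : a * d - b * c = 1) {k : ℕ × ℕ} (hk : k ∈ QN N) :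
    actMod N d (-b) (-c) a (actMod N a b c d k) = k := by
  obtain ⟨hk₁, hk₂, -⟩ := mem_QN.1 hk
  obtain ⟨h₁, h₂⟩ := natCast_eq_of_actMod (N := N) hdet k
  refine Prod.ext ?_ ?_
  · rw [actMod, ← ZMod.val_natCast_of_lt hk₁, h₁]
    push_cast; ring_nf
  · rw [actMod, ← ZMod.val_natCast_of_lt hk₂, h₂]
    push_cast; ring_nf

lemma prod_actMod (hdet : a * d - b * c = 1) (f : ℕ × ℕ → ℂ) :
    ∏ k ∈ QN N, f (actMod N a b c d k) = ∏ k ∈ QN N, f k := by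
  have hdet' : d * a - (-b) * (-c) = 1 := by linear_combination hdet
  refine Finset.prod_nbij' _ (actMod N d (-b) (-c) a) (fun k hk => actMod_mem_QN hdet hk)
    (fun k hk => actMod_mem_QN hdet' hk) (fun k hk => actMod_inv_actMod hdet hk)
    (fun k hk => ?_) fun _ _ => rfl
  simpa only [neg_neg] using actMod_inv_actMod hdet' hk

lemma exists_intCast_div_eq {x : ℤ} {j : ℕ} (h : (j : ZMod N) = x) :
    ∃ m : ℤ, (x : ℂ) / N = j / N + m := by
  obtain ⟨m, hm⟩ := (ZMod.intCast_eq_intCast_iff_dvd_sub j x N).1 (by exact_mod_cast h)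
  refine ⟨m, ?_⟩
  have hN : (N : ℂ) ≠ 0 := Nat.cast_ne_zero.2 (NeZero.ne N)
  field_simp
  exact_mod_cast (by linear_combination hm : x = j + N * m)

end TorsionPoints

lemma Z2_div_smul {N : ℕ} [NeZero N] {τ : ℂ} {a b c d : ℤ} (hτ : 0 < τ.im)
    (hdet : a * d - b * c = 1) (k : ℕ × ℕ) :
    Z2 (k.1 / N) (k.2 / N) ((a * τ + b) / (c * τ + d))
      = (c * τ + d) ^ 3
        * Z2 ((actMod N a b c d k).1 / N) ((actMod N a b c d k).2 / N) τ := by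
  obtain ⟨m, hm⟩ := exists_intCast_div_eq (natCast_actMod_fst (N := N) a b c d k)
  obtain ⟨n, hn⟩ := exists_intCast_div_eq (natCast_actMod_snd (N := N) a b c d k)
  push_cast at hm hn
  rw [Z2_smul hτ hdet, ← Z2_add_intCast hτ (_ / N) (_ / N) m n, ← hm, ← hn]
  congr 2 <;> ring

theorem MN_modular_general (N : ℕ) (a b c d : ℤ) (hdet : a * d - b * c = 1)
    (τ : ℂ) (hτ : 0 < τ.im) :
    MN N (((a : ℂ) * τ + b) / ((c : ℂ) * τ + d))
      = ((c : ℂ) * τ + d) ^ (3 * (QN N).card) * MN N τ := by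
  obtain rfl | hN := N.eq_zero_or_pos
  · simp [MN, QN]
  have : NeZero N := ⟨hN.ne'⟩
  rw [MN, MN, Finset.prod_congr rfl fun k _ => Z2_div_smul hτ hdet k, Finset.prod_mul_distrib,
    Finset.prod_const, pow_mul, prod_actMod hdet fun k => Z2 (k.1 / N) (k.2 / N) τ]

/-- `M_N` is a modular form of weight `3·#Q_N` for `SL(2,ℤ)`: for any
`γ = [[a,b],[c,d]] ∈ SL(2,ℤ)` and `τ ∈ ℍ`, `M_N(γ·τ) = (cτ+d)^{3·#Q_N} M_N(τ)`. -/
theorem MN_modular (N : ℕ) (hN : 3 ≤ N) (a b c d : ℤ) (hdet : a * d - b * c = 1)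
    (τ : ℂ) (hτ : 0 < τ.im) :
    MN N (((a : ℂ) * τ + b) / ((c : ℂ) * τ + d))
      = ((c : ℂ) * τ + d) ^ (3 * (QN N).card) * MN N τ :=
  MN_modular_general N a b c d hdet τ hτ
end

section
/- Let N ≥ 3 be an integer and k₁,k₂ ∈ ℤ with gcd(k₁,k₂,N) = 1. Then there exist γ ∈ Γ(2) and a pair (u,v) ∈ {(1,0),(0,1),(1,1)} such that (k₂,k₁) ≡ (u,v)·γ (mod N) componentwise, i.e., writing γ = [[a,b],[c,d]], one has k₂ ≡ ua + vc (mod N) and k₁ ≡ ub + vd (mod N). -/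
/-- `γ = [[a,b],[c,d]]` lies in the principal congruence subgroup `Γ(2)` of `SL(2,ℤ)`. -/
def InGammaTwo (a b c d : ℤ) : Prop :=
  a * d - b * c = 1 ∧ a ≡ 1 [ZMOD 2] ∧ b ≡ 0 [ZMOD 2] ∧ c ≡ 0 [ZMOD 2] ∧ d ≡ 1 [ZMOD 2]

/-! A residue pair `(k₂, k₁)` with `gcd(k₁, k₂, N) = 1` lifts to a coprime integer pair `(x, y)`:
keep `y = k₁` and take `x = k₂ + tN`, where `t` is the product of the primes dividing `k₁` but not
`k₂` (if `k₁ = 0`, take `(k₂, N)` instead). A coprime pair is not both even, and Bezout with parity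
control makes it the first row, the second row or the sum of the rows of a matrix in `Γ(2)`,
according as `x` is odd and `y` even, `x` even and `y` odd, or both are odd. -/

open UniqueFactorizationMonoid in
theorem exists_isCoprime_add_mul {R : Type*} [CommRing R] [IsDomain R] [IsPrincipalIdealRing R]
    {a b N : R} (hb : b ≠ 0) (h : ∀ p : R, Prime p → p ∣ a → p ∣ b → ¬p ∣ N) :
    ∃ t, IsCoprime (a + t * N) b := by
  classical
  -- Every prime factor of `b` divides exactly one of `a` and `t`, hence not `a + t * N`.
  set t := ∏ q ∈ (factors b).toFinset with ¬q ∣ a, q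
  have not_dvd_of_dvd_t : ∀ p, Prime p → p ∣ t → ¬p ∣ a := by
    intro p hp hpt hpa
    obtain ⟨q, hq, hpq⟩ := hp.exists_mem_finset_dvd hpt
    rw [Finset.mem_filter, Multiset.mem_toFinset] at hq
    exact hq.2 ((hp.associated_of_dvd (prime_of_factor q hq.1) hpq).symm.dvd.trans hpa)
  refine ⟨t, isCoprime_of_prime_dvd (fun h0 => hb h0.2) fun p hp hpx hpb => ?_⟩
  have hpa : p ∣ a := by
    by_contra hpa
    obtain ⟨q, hq, hpq⟩ := exists_mem_factors_of_dvd hb hp.irreducible hpb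
    have hqt : q ∣ t := Finset.dvd_prod_of_mem _ <| Finset.mem_filter.2
      ⟨Multiset.mem_toFinset.2 hq, fun hqa => hpa (hpq.dvd.trans hqa)⟩
    exact hpa ((dvd_add_left ((hpq.dvd.trans hqt).mul_right N)).1 hpx)
  have hptN : p ∣ t * N := (dvd_add_right hpa).1 hpx
  exact h p hp hpa hpb ((hp.dvd_or_dvd hptN).resolve_left fun hpt => not_dvd_of_dvd_t p hp hpt hpa)

theorem Int.exists_isCoprime_modEq {a b N : ℤ} (h : Int.gcd b (Int.gcd a N) = 1) :
    ∃ x y, x ≡ a [ZMOD N] ∧ y ≡ b [ZMOD N] ∧ IsCoprime x y := by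
  rcases eq_or_ne b 0 with rfl | hb
  · refine ⟨a, N, rfl, Int.modEq_zero_iff_dvd.2 dvd_rfl, Int.isCoprime_iff_gcd_eq_one.2 ?_⟩
    simpa using h
  · obtain ⟨t, ht⟩ := exists_isCoprime_add_mul hb fun p hp hpa hpb hpN => by
      have hp1 : p ∣ (Int.gcd b (Int.gcd a N) : ℤ) :=
        Int.dvd_coe_gcd hpb (Int.dvd_coe_gcd hpa hpN)
      rw [h, Nat.cast_one] at hp1
      exact hp.not_dvd_one hp1
    exact ⟨a + t * N, b, by simp [Int.ModEq], rfl, ht⟩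

theorem inGammaTwo_iff {a b c d : ℤ} :
    InGammaTwo a b c d ↔ a * d - b * c = 1 ∧ Odd a ∧ Even b ∧ Even c ∧ Odd d := by
  simp only [InGammaTwo, Int.ModEq, Int.odd_iff, Int.even_iff]
  norm_num

theorem Int.exists_even_odd_mul_sub_mul_eq_one {x y : ℤ} (h : IsCoprime x y) (hx : Odd x) :
    ∃ c d, x * d - y * c = 1 ∧ Even c ∧ Odd d := by
  obtain ⟨u, v, huv⟩ := h
  have hdet : x * (u - y * v) - y * (-v * (x + 1)) = 1 := by linear_combination huv
  have hc : Even (-v * (x + 1)) := hx.add_one.mul_left _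
  have hd : Odd (x * (u - y * v)) := by
    rw [eq_add_of_sub_eq hdet]
    exact (hc.mul_left y).one_add
  exact ⟨_, _, hdet, hc, (Int.odd_mul.1 hd).2⟩

theorem exists_inGammaTwo_eq_row_combination {x y : ℤ} (h : IsCoprime x y) :
    ∃ a b c d : ℤ, InGammaTwo a b c d ∧
      ∃ uv ∈ ({(1, 0), (0, 1), (1, 1)} : Set (ℤ × ℤ)),
        x = uv.1 * a + uv.2 * c ∧ y = uv.1 * b + uv.2 * d := by
  simp only [inGammaTwo_iff]
  rcases Int.even_or_odd x with hx | hx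
  · have hy : Odd y := Int.not_even_iff_odd.1 fun hy =>
      by simpa [Int.isUnit_iff] using h.isUnit_of_dvd' hx.two_dvd hy.two_dvd
    obtain ⟨c, d, hdet, hc, hd⟩ := Int.exists_even_odd_mul_sub_mul_eq_one h.symm hy
    exact ⟨d, c, x, y, ⟨by linear_combination hdet, hd, hc, hx, hy⟩,
      (0, 1), by simp, by ring, by ring⟩
  · obtain ⟨c, d, hdet, hc, hd⟩ := Int.exists_even_odd_mul_sub_mul_eq_one h hx
    rcases Int.even_or_odd y with hy | hy
    · exact ⟨x, y, c, d, ⟨hdet, hx, hy, hc, hd⟩, (1, 0), by simp, by ring, by ring⟩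
    · exact ⟨x - c, y - d, c, d,
        ⟨by linear_combination hdet, hx.sub_even hc, hy.sub_odd hd, hc, hd⟩,
        (1, 1), by simp, by ring, by ring⟩

theorem torsion_equiv_basic_general (N : ℕ) (k₁ k₂ : ℤ)
    (hgcd : Int.gcd k₁ (Int.gcd k₂ (N : ℤ)) = 1) :
    ∃ a b c d : ℤ, InGammaTwo a b c d ∧
      ∃ uv ∈ ({(1, 0), (0, 1), (1, 1)} : Set (ℤ × ℤ)),
        k₂ ≡ uv.1 * a + uv.2 * c [ZMOD (N : ℤ)] ∧ k₁ ≡ uv.1 * b + uv.2 * d [ZMOD (N : ℤ)] := by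
  obtain ⟨x, y, hx, hy, hxy⟩ := Int.exists_isCoprime_modEq hgcd
  obtain ⟨a, b, c, d, hγ, uv, huv, rfl, rfl⟩ := exists_inGammaTwo_eq_row_combination hxy
  exact ⟨a, b, c, d, hγ, uv, huv, hx.symm, hy.symm⟩

/-- Step 1 of Lemma 3.3: for `N ≥ 3` and `gcd(k₁, k₂, N) = 1`, there exist `γ ∈ Γ(2)` and
`(u,v) ∈ {(1,0), (0,1), (1,1)}` with `(k₂, k₁) ≡ (u,v)·γ (mod N)` componentwise. -/
theorem torsion_equiv_basic (N : ℕ) (hN : 3 ≤ N) (k₁ k₂ : ℤ)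
    (hgcd : Int.gcd k₁ (Int.gcd k₂ (N : ℤ)) = 1) :
    ∃ a b c d : ℤ, InGammaTwo a b c d ∧
      ∃ uv ∈ ({(1, 0), (0, 1), (1, 1)} : Set (ℤ × ℤ)),
        k₂ ≡ uv.1 * a + uv.2 * c [ZMOD (N : ℤ)] ∧ k₁ ≡ uv.1 * b + uv.2 * d [ZMOD (N : ℤ)] :=
  torsion_equiv_basic_general N k₁ k₂ hgcd
end

section
/- Let m₁ and m₂ be odd coprime integers. Then there exists γ ∈ Γ(2) such that (1,1)·γ = (m₂, m₁) in ℤ². -/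
/-- Case 1 of Lemma 3.3: for odd coprime integers `m₁, m₂`, there is `γ ∈ Γ(2)` with
`(1,1)·γ = (m₂, m₁)`, i.e. `a + c = m₂` and `b + d = m₁`. -/
theorem odd_coprime_pair_reachable (m₁ m₂ : ℤ) (h₁ : Odd m₁) (h₂ : Odd m₂)
    (hcop : IsCoprime m₁ m₂) :
    ∃ a b c d : ℤ, InGammaTwo a b c d ∧ a + c = m₂ ∧ b + d = m₁ := by
  obtain ⟨u, v, huv⟩ := hcop
  have hm₁ : m₁ ≡ 1 [ZMOD 2] := by
    have := Int.odd_iff.mp h₁; unfold Int.ModEq; omega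
  have hm₂ : m₂ ≡ 1 [ZMOD 2] := by
    have := Int.odd_iff.mp h₂; unfold Int.ModEq; omega
  have key : u + v ≡ 1 [ZMOD 2] := by
    have h : u * m₁ + v * m₂ ≡ u * 1 + v * 1 [ZMOD 2] :=
      ((Int.ModEq.refl u).mul hm₁).add ((Int.ModEq.refl v).mul hm₂)
    rw [huv] at h
    simpa using h.symm
  rcases Int.even_or_odd v with he | ho
  · -- v even: a = u, b = -v, c = m₂ - u, d = m₁ + v
    refine ⟨u, -v, m₂ - u, m₁ + v, ⟨by linear_combination huv, ?_, ?_, ?_, ?_⟩, by ring, by ring⟩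
    all_goals
      obtain ⟨j, hj⟩ := he
      unfold Int.ModEq at *
      omega
  · -- v odd: a = m₂ + u, b = m₁ - v, c = -u, d = v
    refine ⟨m₂ + u, m₁ - v, -u, v, ⟨by linear_combination huv, ?_, ?_, ?_, ?_⟩, by ring, by ring⟩
    all_goals
      obtain ⟨j, hj⟩ := ho
      unfold Int.ModEq at *
      omega
end

section
/- Let (r,s) ∈ ℂ² with (r,s) ∉ ℝ², i.e., Im r ≠ 0 or Im s ≠ 0. Then the set {τ ∈ ℍ : r + sτ ∈ ℤ + ℤτ} = {τ ∈ ℍ : ∃ m,n ∈ ℤ with r + sτ = m + nτ} is infinite. -/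
lemma helper_lattice (r s : ℂ) (n₀ : ℤ) (hs : s - (n₀ : ℂ) ≠ 0) (g : ℕ → ℤ)
    (hg : Function.Injective g)
    (him : ∀ k, 0 < ((((g k : ℤ) : ℂ) - r) / (s - (n₀ : ℂ))).im) :
    {τ : ℂ | 0 < τ.im ∧ ∃ m n : ℤ, r + s * τ = (m : ℂ) + (n : ℂ) * τ}.Infinite := by
  apply Set.infinite_of_injective_forall_mem
    (f := fun k : ℕ => (((g k : ℤ) : ℂ) - r) / (s - (n₀ : ℂ)))
  · intro a b hab
    simp only at hab
    have h2 := congrArg (· * (s - (n₀ : ℂ))) hab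
    simp only [div_mul_cancel₀ _ hs] at h2
    have h3 : ((g a : ℤ) : ℂ) = ((g b : ℤ) : ℂ) := by linear_combination h2
    exact hg (by exact_mod_cast h3)
  · intro k
    refine ⟨him k, g k, n₀, ?_⟩
    field_simp
    ring

/-- Lemma 4.2 (key step): if `(r,s) ∈ ℂ²` is not a pair of real numbers, then there are
infinitely many `τ` in the upper half-plane with `r + sτ ∈ ℤ + ℤτ`. -/
theorem infinitely_many_lattice_times (r s : ℂ) (h : r.im ≠ 0 ∨ s.im ≠ 0) :
    {τ : ℂ | 0 < τ.im ∧ ∃ m n : ℤ, r + s * τ = (m : ℂ) + (n : ℂ) * τ}.Infinite := by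
  rcases eq_or_ne s.im 0 with hs0 | hs0
  · have hr : r.im ≠ 0 := h.resolve_right (by simpa using hs0)
    rcases hr.lt_or_gt with hrneg | hrpos
    · -- r.im < 0 : pick n₀ = ⌊s.re⌋ - 1 < s.re
      set n₀ : ℤ := ⌊s.re⌋ - 1 with hn₀
      have hn : (n₀ : ℝ) < s.re := by
        have := Int.floor_le s.re; push_cast [hn₀]; linarith
      have hsn : s - (n₀ : ℂ) ≠ 0 := by
        intro hc
        have := congrArg Complex.re hc
        simp at this; linarith
      apply helper_lattice r s n₀ hsn (fun k => (k : ℤ)) (fun a b hab => by simpa using hab)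
      intro k
      rw [Complex.div_im]
      have hpos : 0 < Complex.normSq (s - (n₀ : ℂ)) := Complex.normSq_pos.mpr hsn
      simp only [Complex.sub_im, Complex.sub_re, Complex.intCast_im, Complex.intCast_re,
        Complex.natCast_im, Complex.natCast_re, hs0]
      rw [show ((0:ℝ) - 0) = 0 by ring, mul_zero, zero_div, sub_zero]
      apply div_pos _ hpos
      nlinarith
    · -- r.im > 0 : pick n₀ = ⌈s.re⌉ + 1 > s.re
      set n₀ : ℤ := ⌈s.re⌉ + 1 with hn₀
      have hn : s.re < (n₀ : ℝ) := by
        have := Int.le_ceil s.re; push_cast [hn₀]; linarith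
      have hsn : s - (n₀ : ℂ) ≠ 0 := by
        intro hc
        have := congrArg Complex.re hc
        simp at this; linarith
      apply helper_lattice r s n₀ hsn (fun k => (k : ℤ)) (fun a b hab => by simpa using hab)
      intro k
      rw [Complex.div_im]
      have hpos : 0 < Complex.normSq (s - (n₀ : ℂ)) := Complex.normSq_pos.mpr hsn
      simp only [Complex.sub_im, Complex.sub_re, Complex.intCast_im, Complex.intCast_re,
        Complex.natCast_im, Complex.natCast_re, hs0]
      rw [show ((0:ℝ) - 0) = 0 by ring, mul_zero, zero_div, sub_zero]
      apply div_pos _ hpos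
      nlinarith
  · have hsne : s - ((0 : ℤ) : ℂ) ≠ 0 := by
      intro hc
      have := congrArg Complex.im hc
      simp at this; exact hs0 this
    have hpos : 0 < Complex.normSq s := Complex.normSq_pos.mpr (by simpa using hsne)
    rcases hs0.lt_or_gt with hneg | hposim
    · -- s.im < 0 : take m large
      set D : ℝ := (r.im * s.re - r.re * s.im) / (-s.im) with hD
      apply helper_lattice r s 0 hsne (fun k => ⌈D⌉ + 1 + (k : ℤ))
        (fun a b hab => by simp only [add_right_inj] at hab; exact_mod_cast hab)
      intro k
      rw [Complex.div_im]
      simp only [Complex.sub_im, Complex.sub_re, Complex.intCast_im, Complex.intCast_re,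
        Int.cast_zero, sub_zero]
      rw [div_sub_div_same]
      apply div_pos _ hpos
      have hm : D < ((⌈D⌉ + 1 + (k : ℤ) : ℤ) : ℝ) := by
        have h1 := Int.le_ceil D
        push_cast
        have : (0:ℝ) ≤ (k : ℝ) := Nat.cast_nonneg k
        linarith
      have hsim : 0 < -s.im := by linarith
      have h2 : D * (-s.im) < ((⌈D⌉ + 1 + (k : ℤ) : ℤ) : ℝ) * (-s.im) :=
        mul_lt_mul_of_pos_right hm hsim
      have h3 : D * (-s.im) = r.im * s.re - r.re * s.im := by
        rw [hD]; field_simp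
      rw [h3] at h2
      nlinarith
    · -- s.im > 0 : take m small
      set E : ℝ := (r.re * s.im - r.im * s.re) / s.im with hE
      apply helper_lattice r s 0 hsne (fun k => ⌊E⌋ - 1 - (k : ℤ))
        (fun a b hab => by simp only [sub_right_inj] at hab; exact_mod_cast hab)
      intro k
      rw [Complex.div_im]
      simp only [Complex.sub_im, Complex.sub_re, Complex.intCast_im, Complex.intCast_re,
        Int.cast_zero, sub_zero]
      rw [div_sub_div_same]
      apply div_pos _ hpos
      have hm : ((⌊E⌋ - 1 - (k : ℤ) : ℤ) : ℝ) < E := by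
        have h1 := Int.floor_le E
        push_cast
        have : (0:ℝ) ≤ (k : ℝ) := Nat.cast_nonneg k
        linarith
      have h2 : ((⌊E⌋ - 1 - (k : ℤ) : ℤ) : ℝ) * s.im < E * s.im :=
        mul_lt_mul_of_pos_right hm hposim
      have h3 : E * s.im = r.re * s.im - r.im * s.re := by
        rw [hE]; field_simp
      rw [h3] at h2
      nlinarith
end
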